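/- For all real x, y, z ≥ 0, G(x,y,z) + S(x,y,z) + S(x,z,y) = x, where G(x,y,z) = log((eˣ + e^{y+z})/(e^{-x} + e^{y+z})) and S(x,y,z) = (1/2)·log((cosh(z) + cosh(x+y))/(cosh(z) + cosh(x−y))). -/
import Mathlib


open Real

/-- The gap function `G` in the real (logarithmic) form. -/
noncomputable def G (x y z : ℝ) : ℝ :=
  Real.log ((Real.exp x + Real.exp (y + z)) / (Real.exp (-x) + Real.exp (y + z)))

/-- The projection function `S` in the real (logarithmic) form. -/
noncomputable def S (x y z : ℝ) : ℝ :=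
  (1/2) * Real.log ((Real.cosh z + Real.cosh (x + y)) / (Real.cosh z + Real.cosh (x - y)))

theorem G_add_S_add_S (x y z : ℝ) (hx : 0 ≤ x) (hy : 0 ≤ y) (hz : 0 ≤ z) :
    G x y z + S x y z + S x z y = x := by
  unfold G S
  have hP1 : (0:ℝ) < Real.exp x + Real.exp (y + z) := by positivity
  have hP2 : (0:ℝ) < Real.exp (-x) + Real.exp (y + z) := by positivity
  have hN1 : (0:ℝ) < Real.cosh z + Real.cosh (x + y) := by positivity
  have hD1 : (0:ℝ) < Real.cosh z + Real.cosh (x - y) := by positivity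
  have hN2 : (0:ℝ) < Real.cosh y + Real.cosh (x + z) := by positivity
  have hD2 : (0:ℝ) < Real.cosh y + Real.cosh (x - z) := by positivity
  have key : ((Real.exp x + Real.exp (y + z)) / (Real.exp (-x) + Real.exp (y + z))) ^ 2 *
      ((Real.cosh z + Real.cosh (x + y)) / (Real.cosh z + Real.cosh (x - y))) *
      ((Real.cosh y + Real.cosh (x + z)) / (Real.cosh y + Real.cosh (x - z))) =
      Real.exp (2 * x) := by
    have ha := Real.exp_pos x
    have hb := Real.exp_pos y
    have hc := Real.exp_pos z
    simp only [Real.cosh_eq, Real.exp_add, Real.exp_sub, Real.exp_neg, two_mul] at *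
    field_simp
    ring
  have hlog := congrArg Real.log key
  rw [Real.log_exp] at hlog
  rw [Real.log_mul (by positivity) (by positivity),
      Real.log_mul (by positivity) (by positivity),
      Real.log_pow] at hlog
  push_cast at hlog
  linarith
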